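/- (Theorem 4(ii).) Let K ≥ 3, let c > 0 be a real number, let Δ : Fin K → ℝ with Δ₂ ≠ Δ₁ (indices 1-based: the time stamps of the first two sound events differ), and let s¹,…,sᴷ be nonzero vectors in ℝ³ such that for every k ∈ {2,…,K} there exists a nonzero real λ_{k−1} with sᵏ = λ_{k−1} · sᵏ⁻¹ (i.e., all source positions are collinear with the origin). Set uᵏ = sᵏ / (c·‖sᵏ‖) ∈ ℝ³, and define the (K−2)×3 real matrix Ψ whose row indexed by k ∈ {3,…,K} is the row vector (u¹ − uᵏ)ᵀ − ((Δ_k − Δ₁)/(Δ₂ − Δ₁)) · (u¹ − u²)ᵀ. Then rank(Ψ) ≤ 1; in particular Ψ, and hence T̄ = [0; Ψ; 0], does not have full column rank 3. -/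

import Mathlib

/-! Collinearity with the origin puts every `s k`, hence every `u k`, on the line spanned by
`s 0`. Each row of `Ψ`, and of `T̄`, is a linear combination of the `u k`, so all rows lie on that
line and the row rank is at most 1. -/

open Submodule Module

theorem Matrix.rank_le_one_of_row_mem_span_singleton {m n R : Type*} [Field R] [Fintype m]
    [Fintype n] (A : Matrix m n R) (v : n → R) (h : ∀ i, A i ∈ span R {v}) : A.rank ≤ 1 := by
  rw [rank_eq_finrank_span_row]
  calc finrank R (span R (Set.range A.row)) ≤ finrank R (span R {v}) :=
        Submodule.finrank_mono (span_le.2 <| Set.range_subset_iff.2 h)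
    _ ≤ 1 := by simpa using finrank_span_le_card ({v} : Set (n → R))

theorem Fin.mem_span_singleton_zero_of_consecutive_smul {R M : Type*} [Semiring R]
    [AddCommMonoid M] [Module R M] {K : ℕ} (s : Fin K → M)
    (hs : ∀ k l : Fin K, (l : ℕ) + 1 = k → ∃ a : R, s k = a • s l) (k : Fin K) :
    s k ∈ span R {s ⟨0, k.pos⟩} := by
  obtain ⟨k, hk⟩ := k
  induction k with
  | zero => exact subset_span rfl
  | succ k ih =>
    obtain ⟨a, ha⟩ := hs ⟨k + 1, hk⟩ ⟨k, by omega⟩ rfl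
    rw [ha]
    exact smul_mem _ a (ih (by omega))

theorem Tbar_rank_deficient_of_collinear_with_origin
    (K : ℕ) (hK : 3 ≤ K) (c : ℝ)
    (Δ : Fin K → ℝ)
    (s : Fin K → EuclideanSpace ℝ (Fin 3))
    (hcol : ∀ k l : Fin K, (l : ℕ) + 1 = (k : ℕ) →
      ∃ lam : ℝ, lam ≠ 0 ∧ s k = lam • s l)
    (u : Fin K → EuclideanSpace ℝ (Fin 3))
    (hu : ∀ k, u k = (c * ‖s k‖)⁻¹ • s k)
    (Ψ : Matrix (Fin (K - 2)) (Fin 3) ℝ)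
    (hΨ : ∀ (i : Fin (K - 2)) (c3 : Fin 3), Ψ i c3 =
      (u ⟨0, by omega⟩ c3 - u ⟨(i : ℕ) + 2, by omega⟩ c3) -
        ((Δ ⟨(i : ℕ) + 2, by omega⟩ - Δ ⟨0, by omega⟩) /
            (Δ ⟨1, by omega⟩ - Δ ⟨0, by omega⟩)) *
          (u ⟨0, by omega⟩ c3 - u ⟨1, by omega⟩ c3))
    (Tbar : Matrix (Fin 2 ⊕ (Fin (K - 2) ⊕ Fin (3 * K))) (Fin 3) ℝ)
    (hT : ∀ row col, Tbar row col =
      match row, col with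
      | Sum.inl _, _ => 0
      | Sum.inr (Sum.inl i), c3 => Ψ i c3
      | Sum.inr (Sum.inr _), _ => 0) :
    Ψ.rank ≤ 1 ∧ Tbar.rank < 3 := by
  set v := WithLp.ofLp (s ⟨0, by omega⟩)
  have hs_span (k : Fin K) : WithLp.ofLp (s k) ∈ span ℝ {v} :=
    Fin.mem_span_singleton_zero_of_consecutive_smul (fun k => WithLp.ofLp (s k))
      (fun k l hkl => (hcol k l hkl).imp fun a ha => by rw [ha.2]; rfl) k
  have hu_span (k : Fin K) : WithLp.ofLp (u k) ∈ span ℝ {v} := by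
    rw [hu]
    exact smul_mem _ _ (hs_span k)
  have hΨ_span (i : Fin (K - 2)) : Ψ i ∈ span ℝ {v} := by
    rw [show Ψ i = _ from funext (hΨ i)]
    exact sub_mem (sub_mem (hu_span _) (hu_span _))
      (smul_mem _ _ (sub_mem (hu_span _) (hu_span _)))
  have hT_span : ∀ r, Tbar r ∈ span ℝ {v}
    | .inl _ => by rw [show Tbar _ = 0 from funext (hT _)]; exact zero_mem _
    | .inr (.inl i) => by rw [show Tbar _ = Ψ i from funext (hT _)]; exact hΨ_span i
    | .inr (.inr _) => by rw [show Tbar _ = 0 from funext (hT _)]; exact zero_mem _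
  exact ⟨Ψ.rank_le_one_of_row_mem_span_singleton v hΨ_span,
    (Tbar.rank_le_one_of_row_mem_span_singleton v hT_span).trans_lt (by norm_num)⟩
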